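/- arXiv:2208.00923 — 5 statements merged into one kernel-verified Lean document; each statement's English description precedes it below -/
import Mathlib

section
/- The comeager uniformization principle for all projective sets implies that every projective subset of ω^ω has the Baire property. -/
/-- The projective subsets of Baire space: generated from closed sets by complements and
continuous images. -/
inductive Projective : Set (ℕ → ℕ) → Prop
  | of_closed (A : Set (ℕ → ℕ)) : IsClosed A → Projective A
  | compl (A : Set (ℕ → ℕ)) : Projective A → Projective Aᶜ
  | image (A : Set (ℕ → ℕ)) (f : (ℕ → ℕ) → (ℕ → ℕ)) :
      Projective A → Continuous f → Projective (f '' A)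

/-- The canonical homeomorphism `ω^ω × ω^ω → ω^ω`, used to regard subsets of the product
as subsets of Baire space. -/
def pairFn : ((ℕ → ℕ) × (ℕ → ℕ)) → (ℕ → ℕ) := fun p n => Nat.pair (p.1 n) (p.2 n)

/-- A set has the Baire property if it differs from an open set by a meager set. -/
def HasBP {α : Type*} [TopologicalSpace α] (S : Set α) : Prop :=
  ∃ U : Set α, IsOpen U ∧ IsMeagre (symmDiff S U)


/-! Uniformizing the graph of the characteristic function of `A` on a comeager set `B` gives a
function, continuous on `B`, that decides membership in `A` there; so `A ∩ B` is relatively open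
in `B`, and `A` differs from an open set only inside the meagre set `Bᶜ`.

The graph is projective because projective sets are closed under finite unions: they form the
increasing union of the levels `Σ¹ₙ`, starting from the Borel sets (which are analytic), and each
level is closed under continuous preimages and finite unions and intersections; the step from one
level to the next is carried out on subsets of the plane through the homeomorphism `pairFn`. -/

open Set MeasureTheory

def pairHomeomorph : (ℕ → ℕ) × (ℕ → ℕ) ≃ₜ (ℕ → ℕ) where
  toFun := pairFn
  invFun z := (fun n => (z n).unpair.1, fun n => (z n).unpair.2)
  left_inv p := by simp [pairFn]
  right_inv z := by ext n; simp [pairFn]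
  continuous_toFun := by unfold pairFn; fun_prop
  continuous_invFun := by fun_prop

@[simp] lemma coe_pairHomeomorph : ⇑pairHomeomorph = pairFn := rfl

structure IsPointclass (Γ : Set (Set (ℕ → ℕ))) : Prop where
  isOpen_mem ⦃U : Set (ℕ → ℕ)⦄ : IsOpen U → U ∈ Γ
  isClosed_mem ⦃C : Set (ℕ → ℕ)⦄ : IsClosed C → C ∈ Γ
  preimage_mem ⦃A : Set (ℕ → ℕ)⦄ ⦃f : (ℕ → ℕ) → ℕ → ℕ⦄ : A ∈ Γ → Continuous f → f ⁻¹' A ∈ Γ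
  inter_mem ⦃A B : Set (ℕ → ℕ)⦄ : A ∈ Γ → B ∈ Γ → A ∩ B ∈ Γ
  union_mem ⦃A B : Set (ℕ → ℕ)⦄ : A ∈ Γ → B ∈ Γ → A ∪ B ∈ Γ

def continuousImages (Γ : Set (Set (ℕ → ℕ))) : Set (Set (ℕ → ℕ)) :=
  {A | ∃ C ∈ Γ, ∃ f : (ℕ → ℕ) → ℕ → ℕ, Continuous f ∧ f '' C = A}

/-- Level `n + 1` is the boldface class `Σ¹ₙ₊₁`; level `0` is the class of Borel sets. -/
def projectiveHierarchy : ℕ → Set (Set (ℕ → ℕ))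
  | 0 => {A | MeasurableSet A}
  | n + 1 => continuousImages (compl ⁻¹' projectiveHierarchy n)

lemma isPointclass_measurableSet : IsPointclass {A | MeasurableSet A} where
  isOpen_mem _ hU := hU.measurableSet
  isClosed_mem _ hC := hC.measurableSet
  preimage_mem _ _ hA hf := hf.measurable hA
  inter_mem A B (hA : MeasurableSet A) (hB : MeasurableSet B) := hA.inter hB
  union_mem A B (hA : MeasurableSet A) (hB : MeasurableSet B) := hA.union hB

namespace IsPointclass

variable {Γ : Set (Set (ℕ → ℕ))}

protected lemma compl (hΓ : IsPointclass Γ) : IsPointclass (compl ⁻¹' Γ) where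
  isOpen_mem _ hU := hΓ.isClosed_mem hU.isClosed_compl
  isClosed_mem _ hC := hΓ.isOpen_mem hC.isOpen_compl
  preimage_mem _ _ hA hf := hΓ.preimage_mem hA hf
  inter_mem A B hA hB := by
    simpa only [mem_preimage, compl_inter] using hΓ.union_mem hA hB
  union_mem A B hA hB := by
    simpa only [mem_preimage, compl_union] using hΓ.inter_mem hA hB

lemma image_pairFn_preimage (hΓ : IsPointclass Γ) {A : Set (ℕ → ℕ)} (hA : A ∈ Γ)
    {h : (ℕ → ℕ) × (ℕ → ℕ) → ℕ → ℕ} (hh : Continuous h) : pairFn '' (h ⁻¹' A) ∈ Γ := by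
  rw [← coe_pairHomeomorph, Homeomorph.image_eq_preimage_symm, ← preimage_comp]
  exact hΓ.preimage_mem hA (hh.comp pairHomeomorph.symm.continuous)

lemma image_pairFn_of_isClosed (hΓ : IsPointclass Γ) {D : Set ((ℕ → ℕ) × (ℕ → ℕ))}
    (hD : IsClosed D) : pairFn '' D ∈ Γ :=
  hΓ.isClosed_mem (pairHomeomorph.isClosedMap D hD)

lemma image_pairFn_inter (hΓ : IsPointclass Γ) {D E : Set ((ℕ → ℕ) × (ℕ → ℕ))}
    (hD : pairFn '' D ∈ Γ) (hE : pairFn '' E ∈ Γ) : pairFn '' (D ∩ E) ∈ Γ := by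
  rw [← coe_pairHomeomorph, image_inter pairHomeomorph.injective]
  exact hΓ.inter_mem hD hE

end IsPointclass

lemma image_mem_continuousImages_of_pairFn {Γ : Set (Set (ℕ → ℕ))}
    {D : Set ((ℕ → ℕ) × (ℕ → ℕ))} (hD : pairFn '' D ∈ Γ)
    {h : (ℕ → ℕ) × (ℕ → ℕ) → ℕ → ℕ} (hh : Continuous h) : h '' D ∈ continuousImages Γ :=
  ⟨_, hD, h ∘ pairHomeomorph.symm, hh.comp pairHomeomorph.symm.continuous, by
    rw [image_comp, ← coe_pairHomeomorph]
    exact congrArg (h '' ·) (pairHomeomorph.toEquiv.symm_image_image D)⟩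

lemma image_mem_continuousImages {Γ : Set (Set (ℕ → ℕ))} {A : Set (ℕ → ℕ)}
    (hA : A ∈ continuousImages Γ) {f : (ℕ → ℕ) → ℕ → ℕ} (hf : Continuous f) :
    f '' A ∈ continuousImages Γ := by
  obtain ⟨C, hC, g, hg, rfl⟩ := hA
  exact ⟨C, hC, f ∘ g, hf.comp hg, image_comp f g C⟩

lemma subset_continuousImages (Γ : Set (Set (ℕ → ℕ))) : Γ ⊆ continuousImages Γ :=
  fun A hA => ⟨A, hA, id, continuous_id, image_id A⟩

lemma continuousImages_mono : Monotone continuousImages :=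
  fun _ _ h _ ⟨C, hC, f, hf, hA⟩ => ⟨C, h hC, f, hf, hA⟩

lemma image_eq_fst_image_graph {α β : Type*} (f : β → α) (C : Set β) :
    f '' C = Prod.fst '' (Prod.snd ⁻¹' C ∩ {p : α × β | f p.2 = p.1}) := by
  ext x
  constructor
  · rintro ⟨y, hy, rfl⟩
    exact ⟨(f y, y), ⟨hy, rfl⟩, rfl⟩
  · rintro ⟨⟨x, y⟩, ⟨hy, hfy⟩, rfl⟩
    exact ⟨y, hy, hfy⟩

namespace IsPointclass

variable {Γ : Set (Set (ℕ → ℕ))}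

lemma image_pairFn_graph (hΓ : IsPointclass Γ) {C : Set (ℕ → ℕ)} (hC : C ∈ Γ)
    {f : (ℕ → ℕ) → ℕ → ℕ} (hf : Continuous f) :
    pairFn '' (Prod.snd ⁻¹' C ∩ {p | f p.2 = p.1}) ∈ Γ :=
  hΓ.image_pairFn_inter (hΓ.image_pairFn_preimage hC continuous_snd)
    (hΓ.image_pairFn_of_isClosed (isClosed_eq (by fun_prop) continuous_fst))

lemma preimage_mem_continuousImages (hΓ : IsPointclass Γ) {A : Set (ℕ → ℕ)}
    (hA : A ∈ continuousImages Γ) {g : (ℕ → ℕ) → ℕ → ℕ} (hg : Continuous g) :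
    g ⁻¹' A ∈ continuousImages Γ := by
  obtain ⟨C, hC, f, hf, rfl⟩ := hA
  have : g ⁻¹' (f '' C) = Prod.fst '' (Prod.snd ⁻¹' C ∩ {p | f p.2 = g p.1}) := by
    ext x
    constructor
    · rintro ⟨y, hy, hfy⟩
      exact ⟨(x, y), ⟨hy, hfy⟩, rfl⟩
    · rintro ⟨⟨x, y⟩, ⟨hy, hfy⟩, rfl⟩
      exact ⟨y, hy, hfy⟩
  rw [this]
  exact image_mem_continuousImages_of_pairFn (hΓ.image_pairFn_inter
    (hΓ.image_pairFn_preimage hC continuous_snd)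
    (hΓ.image_pairFn_of_isClosed (isClosed_eq (by fun_prop) (by fun_prop)))) continuous_fst

lemma inter_mem_continuousImages (hΓ : IsPointclass Γ) {A B : Set (ℕ → ℕ)}
    (hA : A ∈ continuousImages Γ) (hB : B ∈ continuousImages Γ) :
    A ∩ B ∈ continuousImages Γ := by
  obtain ⟨C, hC, f, hf, rfl⟩ := hA
  obtain ⟨D, hD, g, hg, rfl⟩ := hB
  have : f '' C ∩ g '' D =
      (f ∘ Prod.fst) '' (Prod.fst ⁻¹' C ∩ Prod.snd ⁻¹' D ∩ {p | f p.1 = g p.2}) := by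
    ext x
    constructor
    · rintro ⟨⟨y, hy, rfl⟩, ⟨w, hw, hgw⟩⟩
      exact ⟨(y, w), ⟨⟨hy, hw⟩, hgw.symm⟩, rfl⟩
    · rintro ⟨⟨y, w⟩, ⟨⟨hy, hw⟩, hfg⟩, rfl⟩
      exact ⟨⟨y, hy, rfl⟩, ⟨w, hw, hfg.symm⟩⟩
  rw [this]
  exact image_mem_continuousImages_of_pairFn (hΓ.image_pairFn_inter (hΓ.image_pairFn_inter
    (hΓ.image_pairFn_preimage hC continuous_fst) (hΓ.image_pairFn_preimage hD continuous_snd))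
    (hΓ.image_pairFn_of_isClosed (isClosed_eq (by fun_prop) (by fun_prop)))) (by fun_prop)

lemma union_mem_continuousImages (hΓ : IsPointclass Γ) {A B : Set (ℕ → ℕ)}
    (hA : A ∈ continuousImages Γ) (hB : B ∈ continuousImages Γ) :
    A ∪ B ∈ continuousImages Γ := by
  obtain ⟨C, hC, f, hf, rfl⟩ := hA
  obtain ⟨D, hD, g, hg, rfl⟩ := hB
  rw [image_eq_fst_image_graph f, image_eq_fst_image_graph g, ← image_union]
  refine image_mem_continuousImages_of_pairFn ?_ continuous_fst
  rw [image_union]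
  exact hΓ.union_mem (hΓ.image_pairFn_graph hC hf) (hΓ.image_pairFn_graph hD hg)

protected lemma continuousImages (hΓ : IsPointclass Γ) : IsPointclass (continuousImages Γ) where
  isOpen_mem _ hU := subset_continuousImages Γ (hΓ.isOpen_mem hU)
  isClosed_mem _ hC := subset_continuousImages Γ (hΓ.isClosed_mem hC)
  preimage_mem _ _ hA hg := hΓ.preimage_mem_continuousImages hA hg
  inter_mem _ _ := hΓ.inter_mem_continuousImages
  union_mem _ _ := hΓ.union_mem_continuousImages

end IsPointclass

lemma isPointclass_projectiveHierarchy : ∀ n, IsPointclass (projectiveHierarchy n)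
  | 0 => isPointclass_measurableSet
  | n + 1 => (isPointclass_projectiveHierarchy n).compl.continuousImages

lemma monotone_projectiveHierarchy : Monotone projectiveHierarchy := by
  refine monotone_nat_of_le_succ fun n => ?_
  induction n with
  | zero => exact fun A (hA : MeasurableSet A) => ⟨A, hA.compl, id, continuous_id, image_id A⟩
  | succ n ih => exact continuousImages_mono (preimage_mono ih)

lemma projective_iff_exists_mem_projectiveHierarchy {A : Set (ℕ → ℕ)} :
    Projective A ↔ ∃ n, A ∈ projectiveHierarchy n := by
  constructor
  · intro hA
    induction hA with
    | of_closed A hA => exact ⟨0, hA.measurableSet⟩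
    | compl A _ ih =>
      obtain ⟨n, hn⟩ := ih
      refine ⟨n + 1, subset_continuousImages _ ?_⟩
      rwa [mem_preimage, compl_compl]
    | image A f _ hf ih =>
      obtain ⟨n, hn⟩ := ih
      exact ⟨n + 1, image_mem_continuousImages (monotone_projectiveHierarchy n.le_succ hn) hf⟩
  · rintro ⟨n, hn⟩
    induction n generalizing A with
    | zero =>
      have hA := (show MeasurableSet A from hn).analyticSet
      rw [AnalyticSet] at hA
      rcases hA with rfl | ⟨f, hf, rfl⟩
      · exact .of_closed _ isClosed_empty
      · rw [← image_univ]
        exact .image _ _ (.of_closed _ isClosed_univ) hf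
    | succ n ih =>
      obtain ⟨C, hC, f, hf, rfl⟩ := hn
      have hC' := Projective.compl _ (ih hC)
      rw [compl_compl] at hC'
      exact .image _ _ hC' hf

lemma Projective.union {A B : Set (ℕ → ℕ)} (hA : Projective A) (hB : Projective B) :
    Projective (A ∪ B) := by
  obtain ⟨m, hm⟩ := projective_iff_exists_mem_projectiveHierarchy.mp hA
  obtain ⟨n, hn⟩ := projective_iff_exists_mem_projectiveHierarchy.mp hB
  exact projective_iff_exists_mem_projectiveHierarchy.mpr ⟨max m n,
    (isPointclass_projectiveHierarchy _).union_mem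
      (monotone_projectiveHierarchy (le_max_left m n) hm)
      (monotone_projectiveHierarchy (le_max_right m n) hn)⟩

lemma Projective.image_pairFn_prod_singleton {A : Set (ℕ → ℕ)} (hA : Projective A)
    (c : ℕ → ℕ) : Projective (pairFn '' (A ×ˢ {c})) := by
  rw [prod_singleton, image_image, ← coe_pairHomeomorph]
  exact .image _ _ hA (by fun_prop)

lemma hasBP_of_continuousOn {α β : Type*} [TopologicalSpace α] [TopologicalSpace β]
    {A B : Set α} (hB : B ∈ residual α) {f : α → β} (hf : ContinuousOn f B) {V : Set β}
    (hV : IsOpen V) (hAV : ∀ x ∈ B, x ∈ A ↔ f x ∈ V) : HasBP A := by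
  obtain ⟨U, hU, hfU⟩ := continuousOn_iff'.mp hf V hV
  have hAU : symmDiff A U ⊆ Bᶜ := by
    intro x hx hxB
    have hxU : x ∈ U ↔ x ∈ A := by
      simpa [hxB, ← hAV x hxB] using (Set.ext_iff.mp hfU x).symm
    rw [mem_symmDiff, hxU] at hx
    tauto
  exact ⟨U, hU, IsMeagre.mono hAU (by rwa [IsMeagre, compl_compl])⟩

/-- The comeager uniformization principle for projective sets implies that every
projective subset of Baire space has the Baire property. -/
theorem stmt_6
    (hCU : ∀ X : Set ((ℕ → ℕ) × (ℕ → ℕ)), Projective (pairFn '' X) →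
      (∀ x : ℕ → ℕ, ∃ y : ℕ → ℕ, (x, y) ∈ X) →
      ∃ B : Set (ℕ → ℕ), B ∈ residual (ℕ → ℕ) ∧
        ∃ f : (ℕ → ℕ) → (ℕ → ℕ), ContinuousOn f B ∧ ∀ x ∈ B, (x, f x) ∈ X) :
    ∀ A : Set (ℕ → ℕ), Projective A → HasBP A := by
  intro A hA
  have hX : Projective (pairFn '' (A ×ˢ {1} ∪ Aᶜ ×ˢ {0})) := by
    rw [image_union]
    exact (hA.image_pairFn_prod_singleton 1).union ((hA.compl _).image_pairFn_prod_singleton 0)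
  have hsections (x : ℕ → ℕ) : ∃ y : ℕ → ℕ, (x, y) ∈ A ×ˢ {1} ∪ Aᶜ ×ˢ {0} := by
    by_cases hx : x ∈ A
    · exact ⟨1, .inl ⟨hx, rfl⟩⟩
    · exact ⟨0, .inr ⟨hx, rfl⟩⟩
  obtain ⟨B, hB, f, hf, hfX⟩ := hCU _ hX hsections
  refine hasBP_of_continuousOn hB hf ((isOpen_discrete {1}).preimage (continuous_apply 0))
    fun x hx => ?_
  rcases hfX x hx with ⟨hxA, hfx⟩ | ⟨hxA, hfx⟩ <;>
    simp_all [show f x = _ from hfx]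
end

section
/- Let λ be a limit ordinal and let ⟨R_α : α < λ⟩ be an increasing sequence of subsets of 2^ω with ⋃_{α<λ} R_α = 2^ω, such that for every perfect closed set P ⊆ 2^ω there exists β < λ with P ∩ (R_{α+1} \ R_α) ≠ ∅ for every α with β ≤ α < λ. Then the set B := ⋃_{α<λ, α even} (R_{α+1} \ R_α) is a Bernstein set: neither B nor its complement contains a perfect closed set. -/
/-!
The differences `R (α + 1) \ R α` are pairwise disjoint, since `R` is increasing. A perfect
set `P` meets every difference from some stage `β` on, and `[β, λ)` contains an even and an
odd ordinal, because `λ` is a limit and `α + 1` has the opposite parity of `α`. So `P` meets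
some difference at an even stage, which lies in `B`, and one at an odd stage, which is
disjoint from `B`.
-/

/-- An ordinal is even if it is of the form `δ + 2n` with `δ` zero or a limit ordinal. -/
def EvenOrd (α : Ordinal) : Prop :=
  ∃ (δ : Ordinal) (n : ℕ), (δ = 0 ∨ Order.IsSuccLimit δ) ∧ α = δ + 2 * n

namespace Ordinal

lemma eq_zero_or_isSuccLimit_iff_omega0_dvd {δ : Ordinal} :
    δ = 0 ∨ Order.IsSuccLimit δ ↔ ω ∣ δ := by
  rw [← isSuccPrelimit_iff_omega0_dvd]
  refine ⟨?_, fun h => or_iff_not_imp_left.2 fun h0 => .mk ?_ h⟩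
  · rintro (rfl | h)
    exacts [Order.isSuccPrelimit_bot, h.isSuccPrelimit]
  · rwa [isMin_iff_eq_bot]

lemma add_natCast_mod_omega0 {δ : Ordinal} (hδ : ω ∣ δ) (n : ℕ) : (δ + n) % ω = n := by
  obtain ⟨q, rfl⟩ := hδ
  rw [mul_add_mod_self, natCast_mod_omega0]

lemma evenOrd_iff_even {α : Ordinal} {n : ℕ} (hn : α % ω = n) : EvenOrd α ↔ Even n := by
  simp only [EvenOrd, eq_zero_or_isSuccLimit_iff_omega0_dvd]
  constructor
  · rintro ⟨δ, m, hδ, rfl⟩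
    have hmod := add_natCast_mod_omega0 hδ (2 * m)
    push_cast at hmod
    rw [hmod] at hn
    exact (by exact_mod_cast hn : 2 * m = n) ▸ even_two_mul m
  · rintro ⟨m, rfl⟩
    refine ⟨ω * (α / ω), m, dvd_mul_right _ _, ?_⟩
    rw [show (2 : Ordinal) * m = (m + m : ℕ) by norm_cast; omega, ← hn, div_add_mod]

lemma evenOrd_add_one_iff (α : Ordinal) : EvenOrd (α + 1) ↔ ¬ EvenOrd α := by
  obtain ⟨n, hn⟩ := lt_omega0.1 (mod_lt α omega0_ne_zero)
  have hsucc : (α + 1) % ω = (n + 1 : ℕ) := by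
    rw [← div_add_mod α ω, hn, add_assoc, ← Nat.cast_add_one,
      add_natCast_mod_omega0 (dvd_mul_right _ _)]
  rw [evenOrd_iff_even hsucc, evenOrd_iff_even hn, Nat.even_add_one]

lemma exists_mem_Ico_evenOrd_iff {β lam : Ordinal} (hlim : Order.IsSuccLimit lam)
    (hβ : β < lam) (p : Prop) : ∃ α ∈ Set.Ico β lam, (EvenOrd α ↔ p) := by
  by_cases h : EvenOrd β ↔ p
  · exact ⟨β, ⟨le_rfl, hβ⟩, h⟩
  · refine ⟨β + 1, ⟨le_self_add, hlim.add_one_lt hβ⟩, ?_⟩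
    rw [evenOrd_add_one_iff]
    tauto

lemma eq_of_mem_sdiff_add_one {X : Type*} {lam : Ordinal} {R : Ordinal → Set X}
    (hmono : ∀ α β : Ordinal, α ≤ β → β < lam → R α ⊆ R β) {α γ : Ordinal} {x : X}
    (hα : α < lam) (hγ : γ < lam) (hxα : x ∈ R (α + 1) \ R α) (hxγ : x ∈ R (γ + 1) \ R γ) :
    α = γ :=
  le_antisymm (not_lt.1 fun h => hxα.2 (hmono _ _ (Order.add_one_le_of_lt h) hα hxγ.1))
    (not_lt.1 fun h => hxγ.2 (hmono _ _ (Order.add_one_le_of_lt h) hγ hxα.1))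

end Ordinal

open Ordinal

theorem stmt_10_general (lam : Ordinal) (hlim : Order.IsSuccLimit lam)
    (R : Ordinal → Set (ℕ → Bool))
    (hmono : ∀ α β : Ordinal, α ≤ β → β < lam → R α ⊆ R β)
    (hperf : ∀ P : Set (ℕ → Bool), Perfect P → P.Nonempty →
      ∃ β < lam, ∀ α : Ordinal, β ≤ α → α < lam → (P ∩ (R (α + 1) \ R α)).Nonempty) :
    ∀ P : Set (ℕ → Bool), Perfect P → P.Nonempty →
      ¬ P ⊆ (⋃ α ∈ {α : Ordinal | α < lam ∧ EvenOrd α}, R (α + 1) \ R α) ∧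
      ¬ P ⊆ (⋃ α ∈ {α : Ordinal | α < lam ∧ EvenOrd α}, R (α + 1) \ R α)ᶜ := by
  intro P hP hPne
  obtain ⟨β, hβ, hmeet⟩ := hperf P hP hPne
  constructor
  · obtain ⟨α, ⟨hβα, hα⟩, hodd⟩ := exists_mem_Ico_evenOrd_iff hlim hβ False
    obtain ⟨x, hxP, hxα⟩ := hmeet α hβα hα
    intro hsub
    obtain ⟨γ, ⟨hγ, hγeven⟩, hxγ⟩ := Set.mem_iUnion₂.1 (hsub hxP)
    exact hodd.1 (eq_of_mem_sdiff_add_one hmono hγ hα hxγ hxα ▸ hγeven)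
  · obtain ⟨α, ⟨hβα, hα⟩, heven⟩ := exists_mem_Ico_evenOrd_iff hlim hβ True
    obtain ⟨x, hxP, hxα⟩ := hmeet α hβα hα
    exact fun hsub => hsub hxP (Set.mem_biUnion ⟨hα, heven.2 trivial⟩ hxα)

/-- Given an increasing, exhaustive λ-sequence of sets of reals such that every perfect
closed set eventually meets every difference `R (α+1) \ R α`, the union of the
differences at even stages is a Bernstein set. -/
theorem stmt_10 (lam : Ordinal) (hlim : Order.IsSuccLimit lam)
    (R : Ordinal → Set (ℕ → Bool))
    (hmono : ∀ α β : Ordinal, α ≤ β → β < lam → R α ⊆ R β)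
    (hunion : ⋃ α ∈ {α : Ordinal | α < lam}, R α = Set.univ)
    (hperf : ∀ P : Set (ℕ → Bool), Perfect P → P.Nonempty →
      ∃ β < lam, ∀ α : Ordinal, β ≤ α → α < lam → (P ∩ (R (α + 1) \ R α)).Nonempty) :
    ∀ P : Set (ℕ → Bool), Perfect P → P.Nonempty →
      ¬ P ⊆ (⋃ α ∈ {α : Ordinal | α < lam ∧ EvenOrd α}, R (α + 1) \ R α) ∧
      ¬ P ⊆ (⋃ α ∈ {α : Ordinal | α < lam ∧ EvenOrd α}, R (α + 1) \ R α)ᶜ :=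
  stmt_10_general lam hlim R hmono hperf
end

section
/- Let ⟨d_α : α < κ⟩ be a partition of 2^ω into nonempty sets indexed by a limit ordinal κ, such that for every perfect closed set P ⊆ 2^ω there exists β < κ with P ∩ d_α ≠ ∅ for all α with β < α < κ. Then B := ⋃_{α<κ} d_{2α} is a Bernstein set. -/
/-! Every perfect set `P` meets all pieces `d γ` with `β < γ < κ` for some `β < κ`. Both the odd
index `2β + 1` and the even index `2(β + 1)` lie in that interval, so `P` meets an odd piece,
which is disjoint from the even union `B`, and an even piece, which lies inside `B`. -/

namespace Ordinal

theorem two_mul_add_one_ne_two_mul (α β : Ordinal) : 2 * α + 1 ≠ 2 * β := by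
  intro h
  have hmod := congrArg (· % 2) h
  simp only [mul_add_mod_self, mul_mod] at hmod
  rw [mod_eq_of_lt one_lt_two] at hmod
  exact one_ne_zero hmod

theorem lt_two_mul_add_one (α : Ordinal) : α < 2 * α + 1 :=
  (le_mul_right α two_pos).trans_lt (lt_add_one _)

theorem lt_two_mul_add_two (α : Ordinal) : α < 2 * (α + 1) :=
  (lt_add_one α).trans_le (le_mul_right _ two_pos)

end Ordinal

open Ordinal

theorem disjoint_odd_piece_biUnion_even {X : Type*} {κ β : Ordinal} {d : Ordinal → Set X}
    (hInd : ∀ α < κ, 2 * α < κ) (hdisj : ∀ α < κ, ∀ β < κ, α ≠ β → Disjoint (d α) (d β))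
    (hβ : 2 * β + 1 < κ) :
    Disjoint (d (2 * β + 1)) (⋃ α ∈ {α : Ordinal | α < κ}, d (2 * α)) :=
  Set.disjoint_iUnion₂_right.mpr fun α hα =>
    hdisj _ hβ _ (hInd α hα) (two_mul_add_one_ne_two_mul β α)

theorem stmt_11_general (κ : Ordinal) (hκ : Order.IsSuccLimit κ) (hInd : ∀ α < κ, 2 * α < κ)
    (d : Ordinal → Set (ℕ → Bool))
    (hdisj : ∀ α < κ, ∀ β < κ, α ≠ β → Disjoint (d α) (d β))
    (hperf : ∀ P : Set (ℕ → Bool), Perfect P → P.Nonempty →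
      ∃ β < κ, ∀ α : Ordinal, β < α → α < κ → (P ∩ d α).Nonempty) :
    ∀ P : Set (ℕ → Bool), Perfect P → P.Nonempty →
      ¬ P ⊆ (⋃ α ∈ {α : Ordinal | α < κ}, d (2 * α)) ∧
      ¬ P ⊆ (⋃ α ∈ {α : Ordinal | α < κ}, d (2 * α))ᶜ := by
  intro P hP hPne
  obtain ⟨β, hβκ, hmeet⟩ := hperf P hP hPne
  have hodd : 2 * β + 1 < κ := hκ.add_one_lt (hInd β hβκ)
  have hsucc : β + 1 < κ := hκ.add_one_lt hβκ
  refine ⟨fun hsub => ?_, fun hsub => ?_⟩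
  · obtain ⟨x, hxP, hx⟩ := hmeet _ (lt_two_mul_add_one β) hodd
    exact Set.disjoint_left.mp (disjoint_odd_piece_biUnion_even hInd hdisj hodd) hx (hsub hxP)
  · obtain ⟨x, hxP, hx⟩ := hmeet _ (lt_two_mul_add_two β) (hInd _ hsucc)
    exact hsub hxP (Set.mem_biUnion hsucc hx)

/-- Given a partition `⟨d α : α < κ⟩` of Cantor space indexed by an additively
indecomposable limit ordinal `κ`, such that every perfect closed set meets all
sufficiently late pieces, the union of the even-indexed pieces `d (2·α)` is a
Bernstein set. -/
theorem stmt_11 (κ : Ordinal) (hκ : Order.IsSuccLimit κ) (hInd : ∀ α < κ, 2 * α < κ)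
    (d : Ordinal → Set (ℕ → Bool))
    (hne : ∀ α < κ, (d α).Nonempty)
    (hdisj : ∀ α < κ, ∀ β < κ, α ≠ β → Disjoint (d α) (d β))
    (hcover : ⋃ α ∈ {α : Ordinal | α < κ}, d α = Set.univ)
    (hperf : ∀ P : Set (ℕ → Bool), Perfect P → P.Nonempty →
      ∃ β < κ, ∀ α : Ordinal, β < α → α < κ → (P ∩ d α).Nonempty) :
    ∀ P : Set (ℕ → Bool), Perfect P → P.Nonempty →
      ¬ P ⊆ (⋃ α ∈ {α : Ordinal | α < κ}, d (2 * α)) ∧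
      ¬ P ⊆ (⋃ α ∈ {α : Ordinal | α < κ}, d (2 * α))ᶜ :=
  stmt_11_general κ hκ hInd d hdisj hperf
end

section
/- Assume the Continuum Hypothesis (with AC). Then there exists a Luzin set: an uncountable set L ⊆ ℝ such that L ∩ M is countable for every meager set M ⊆ ℝ. -/
/-!
Under CH the closed nowhere dense subsets of `ℝ` can be enumerated as `(F_α)_{α < ω₁}`, and every
meagre set is covered by countably many of them. Pick by transfinite recursion a point `x_α`
outside the meagre set `⋃_{β ≤ α} F_β` and distinct from all earlier points. Then
`{x_α | α < ω₁}` is uncountable, and it meets each `F_β` only in the countably many points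
`x_α` with `α < β`; hence it meets every meagre set in a countable set.
-/

open Set Cardinal Filter Topology Function

section

variable {X : Type*} [TopologicalSpace X]

def IsLuzin (L : Set X) : Prop :=
  ¬ L.Countable ∧ ∀ M : Set X, IsMeagre M → (L ∩ M).Countable

def closedNowhereDenseSets (X : Type*) [TopologicalSpace X] : Set (Set X) :=
  {F | IsClosed F ∧ IsNowhereDense F}

lemma IsMeagre.exists_countable_subset_closedNowhereDenseSets {M : Set X} (hM : IsMeagre M) :
    ∃ J ⊆ closedNowhereDenseSets X, J.Countable ∧ M ⊆ ⋃₀ J := by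
  obtain ⟨S, hS, hSc, hMS⟩ := isMeagre_iff_countable_union_isNowhereDense.mp hM
  refine ⟨closure '' S, ?_, hSc.image _, hMS.trans (sUnion_mono_subsets fun t => subset_closure)⟩
  rintro _ ⟨t, ht, rfl⟩
  exact ⟨isClosed_closure, (hS t ht).closure⟩

lemma mk_setOf_isClosed_le_continuum [SecondCountableTopology X] :
    #{F : Set X | IsClosed F} ≤ 𝔠 := by
  obtain ⟨b, hbc, -, hb⟩ := TopologicalSpace.exists_countable_basis X
  -- a closed set is determined by the basic open sets inside its complement
  let code : {F : Set X | IsClosed F} → Set b := fun F => {u | (u : Set X) ⊆ (F : Set X)ᶜ}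
  have hcode : Injective code := by
    rintro ⟨F, hF⟩ ⟨G, hG⟩ h
    have hbasic : {u | u ∈ b ∧ u ⊆ Fᶜ} = {u | u ∈ b ∧ u ⊆ Gᶜ} :=
      ext fun u => and_congr_right fun hu => Set.ext_iff.mp h ⟨u, hu⟩
    rw [Subtype.mk.injEq, ← compl_inj_iff, hb.open_eq_sUnion' hF.isOpen_compl,
      hb.open_eq_sUnion' hG.isOpen_compl, hbasic]
  calc #{F : Set X | IsClosed F} ≤ #(Set b) := mk_le_of_injective hcode
    _ = 2 ^ #b := mk_set
    _ ≤ 2 ^ ℵ₀ := power_le_power_left two_ne_zero hbc.le_aleph0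

section NoIsolatedPoints

variable [T1Space X] [∀ x : X, NeBot (𝓝[≠] x)]

lemma isNowhereDense_singleton (x : X) : IsNowhereDense ({x} : Set X) :=
  isClosed_singleton.isNowhereDense_iff.mpr (interior_singleton x)

lemma Set.Countable.isMeagre {s : Set X} (hs : s.Countable) : IsMeagre s := by
  rw [← biUnion_of_singleton s]
  exact isMeagre_biUnion hs fun x _ => (isNowhereDense_singleton x).isMeagre

lemma mk_le_mk_closedNowhereDenseSets : #X ≤ #(closedNowhereDenseSets X) :=
  mk_le_of_injective (f := fun x => ⟨{x}, isClosed_singleton, isNowhereDense_singleton x⟩)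
    fun _ _ h => singleton_injective (congrArg Subtype.val h)

end NoIsolatedPoints

lemma IsMeagre.exists_notMem [BaireSpace X] [Nonempty X] {s : Set X} (hs : IsMeagre s) :
    ∃ x, x ∉ s := by
  by_contra! h
  exact not_isMeagre_of_isOpen isOpen_univ univ_nonempty (hs.mono fun x _ => h x)

section LuzinConstruction

variable [BaireSpace X] [Nonempty X] [T1Space X] [∀ x : X, NeBot (𝓝[≠] x)] {ι : Type*}

lemma exists_injective_forall_notMem_of_not_rel (r : ι → ι → Prop) [IsWellOrder ι r]
    (hr : ∀ i, {j | r j i}.Countable) {C : ι → Set X} (hC : ∀ i, IsMeagre (C i)) :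
    ∃ x : ι → X, Injective x ∧ ∀ i j, ¬ r i j → x i ∉ C j := by
  have hle : ∀ i, {j | ¬ r i j}.Countable := fun i =>
    ((hr i).insert i).mono fun j hj =>
      ((trichotomous_of r j i).imp_right (·.resolve_right hj)).symm
  have hbad : ∀ i (prev : ∀ j, r j i → X),
      IsMeagre ((⋃ j ∈ {j | ¬ r i j}, C j) ∪ range fun j : {j | r j i} => prev j j.2) :=
    fun i prev =>
      have := (hr i).to_subtype
      (isMeagre_biUnion (hle i) fun j _ => hC j).union (countable_range _).isMeagre
  choose next hnext using fun i prev => (hbad i prev).exists_notMem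
  set x : ι → X := IsWellFounded.fix r next
  have hx : ∀ i, x i ∉ (⋃ j ∈ {j | ¬ r i j}, C j) ∪ range fun j : {j | r j i} => x j := fun i => by
    rw [show x i = next i fun j _ => x j from IsWellFounded.fix_eq r next i]
    exact hnext i _
  have hxC : ∀ i j, ¬ r i j → x i ∉ C j := fun i j hij hxij =>
    hx i (Or.inl (mem_biUnion hij hxij))
  have hxprev : ∀ i j, r j i → x j ≠ x i := fun i j hji hxji =>
    hx i (Or.inr ⟨⟨j, hji⟩, hxji⟩)
  refine ⟨x, fun i j hij => ?_, hxC⟩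
  rcases trichotomous_of r i j with h | h | h
  · exact absurd hij (hxprev j i h)
  · exact h
  · exact absurd hij.symm (hxprev i j h)

theorem exists_isLuzin_of_cofinal {𝓕 : Set (Set X)} (h𝓕 : #𝓕 = ℵ₁)
    (hmeagre : ∀ F ∈ 𝓕, IsMeagre F)
    (hcof : ∀ M, IsMeagre M → ∃ J ⊆ 𝓕, J.Countable ∧ M ⊆ ⋃₀ J) :
    ∃ L : Set X, IsLuzin L := by
  obtain ⟨r, _, hr⟩ := exists_ord_eq 𝓕
  have hseg : ∀ F, {G | r G F}.Countable := fun F => by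
    rw [← le_aleph0_iff_set_countable, ← lt_aleph_one_iff, ← h𝓕]
    exact card_typein_lt F hr
  obtain ⟨x, hinj, hxF⟩ :=
    exists_injective_forall_notMem_of_not_rel r hseg fun F : 𝓕 => hmeagre F F.2
  refine ⟨range x, fun h => ?_, fun M hM => ?_⟩
  · have : Countable 𝓕 := countable_univ_iff.mp (by simpa using h.preimage hinj)
    exact (h𝓕 ▸ mk_le_aleph0).not_gt aleph0_lt_aleph_one
  · obtain ⟨J, hJ𝓕, hJ, hMJ⟩ := hcof M hM
    refine ((hJ.preimage Subtype.val_injective).biUnion fun F _ => (hseg F).image x).mono ?_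
    rintro _ ⟨⟨G, rfl⟩, hG⟩
    obtain ⟨F, hFJ, hGF⟩ := hMJ hG
    exact mem_biUnion (x := ⟨F, hJ𝓕 hFJ⟩) hFJ ⟨G, not_not.mp fun h => hxF G _ h hGF, rfl⟩

end LuzinConstruction

end

lemma mk_closedNowhereDenseSets_real : #(closedNowhereDenseSets ℝ) = 𝔠 :=
  le_antisymm ((mk_le_mk_of_subset fun _ hF => hF.1).trans mk_setOf_isClosed_le_continuum)
    (mk_real ▸ mk_le_mk_closedNowhereDenseSets)

/-- CH implies the existence of a Luzin set: an uncountable set of reals meeting every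
meager set in a countable set. -/
theorem stmt_13 (hCH : Cardinal.continuum = Cardinal.aleph 1) :
    ∃ L : Set ℝ, ¬ L.Countable ∧ ∀ M : Set ℝ, IsMeagre M → (L ∩ M).Countable := by
  -- `hCH` is stated in an arbitrary universe; transfer it to `Cardinal.{0}`, where `#ℝ` lives.
  have hCH₀ : 𝔠 = (ℵ₁ : Cardinal.{0}) := lift_injective.{_, 0} (by simpa using hCH)
  exact exists_isLuzin_of_cofinal (mk_closedNowhereDenseSets_real.trans hCH₀)
    (fun _ hF => hF.2.isMeagre) fun _ hM => hM.exists_countable_subset_closedNowhereDenseSets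
end

section
/- Assume the Continuum Hypothesis (with AC). Then there exists a Sierpiński set: an uncountable set S ⊆ ℝ such that S ∩ N is countable for every Lebesgue null set N ⊆ ℝ. -/
/-!
Enumerate a cofinal family of null sets as `(N i)` along `ω₁` and pick, for each `i`, a point
`x i` outside the null set `⋃ j ≤ i, N j`. A null set lies inside some `N i`, so it can only
contain the countably many points `x j` with `j < i`; and the set of all `x i` is uncountable,
since a countable set is null and would have to contain its own `x i`. Under CH the measurable
null sets form such a family, because a second countable space has only `𝔠` Borel sets.
-/

open Cardinal MeasureTheory Set

section Sierpinski

variable {α : Type*} [MeasurableSpace α] (μ : Measure α) [NullSingletonClass μ] [NeZero μ]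

theorem exists_sierpinski_of_cofinal_family {ι : Type*} [LinearOrder ι]
    (hι : ∀ i : ι, (Iic i).Countable) (N : ι → Set α) (hN : ∀ i, μ (N i) = 0)
    (hcof : ∀ s, μ s = 0 → ∃ i, s ⊆ N i) :
    ∃ S : Set α, ¬ S.Countable ∧ ∀ s, μ s = 0 → (S ∩ s).Countable := by
  have hx : ∀ i, ∃ x, x ∉ ⋃ j ∈ Iic i, N j := fun i =>
    (measure_eq_zero_iff_ae_notMem.1 <|
      (measure_biUnion_null_iff (hι i)).2 fun j _ => hN j).exists
  choose x hx using hx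
  have hxN : ∀ {i j}, j ≤ i → x i ∉ N j := fun hji hxj => hx _ (mem_biUnion hji hxj)
  refine ⟨range x, fun hS => ?_, fun s hs => ?_⟩
  · obtain ⟨i, hi⟩ := hcof _ (hS.measure_zero μ)
    exact hxN le_rfl (hi (mem_range_self i))
  · obtain ⟨i, hi⟩ := hcof s hs
    refine ((hι i).image x).mono ?_
    rintro _ ⟨⟨j, rfl⟩, hj⟩
    exact ⟨j, le_of_not_ge fun hij => hxN hij (hi hj), rfl⟩

theorem exists_sierpinski_of_mk_le_aleph_one (𝒩 : Set (Set α)) (h𝒩 : #𝒩 ≤ ℵ₁)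
    (hnull : ∀ t ∈ 𝒩, μ t = 0) (hcof : ∀ s, μ s = 0 → ∃ t ∈ 𝒩, s ⊆ t) :
    ∃ S : Set α, ¬ S.Countable ∧ ∀ s, μ s = 0 → (S ∩ s).Countable := by
  obtain ⟨f, hf⟩ : ∃ f : (ℵ₁ : Cardinal).ord.ToType → 𝒩, Function.Surjective f := by
    refine Function.exists_surjective_iff.2 ⟨?_, ?_⟩
    · obtain ⟨t, ht, -⟩ := hcof ∅ measure_empty
      exact ⟨fun _ => ⟨t, ht⟩⟩
    · rwa [← le_def, mk_toType, card_ord]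
  refine exists_sierpinski_of_cofinal_family μ (fun i => ?_) (fun i => f i)
    (fun i => hnull _ (f i).2) fun s hs => ?_
  · rw [← Iio_insert]
    have hi : #(Iio i) < ℵ₁ := by simpa using mk_Iio_lt i
    exact (le_aleph0_iff_set_countable.1 (lt_aleph_one_iff.1 hi)).insert i
  · obtain ⟨t, ht, hst⟩ := hcof s hs
    obtain ⟨i, hi⟩ := hf ⟨t, ht⟩
    exact ⟨i, hi ▸ hst⟩

end Sierpinski

theorem mk_measurableSet_le_continuum {X : Type*} [TopologicalSpace X]
    [SecondCountableTopology X] [MeasurableSpace X] [BorelSpace X] :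
    #{s : Set X | MeasurableSet s} ≤ 𝔠 := by
  obtain ⟨b, hbc, -, hb⟩ := TopologicalSpace.exists_countable_basis X
  rw [BorelSpace.measurable_eq (α := X), hb.borel_eq_generateFrom]
  exact MeasurableSpace.cardinal_measurableSet_le_continuum
    (hbc.le_aleph0.trans aleph0_le_continuum)

/-- CH implies the existence of a Sierpiński set: an uncountable set of reals meeting
every Lebesgue null set in a countable set. -/
theorem stmt_14 (hCH : Cardinal.continuum = Cardinal.aleph 1) :
    ∃ S : Set ℝ, ¬ S.Countable ∧
      ∀ N : Set ℝ, MeasureTheory.volume N = 0 → (S ∩ N).Countable := by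
  -- `hCH` lives in an arbitrary universe, while the Borel sets of `ℝ` are counted in `Cardinal.{0}`.
  have hcard : #{s : Set ℝ | MeasurableSet s ∧ volume s = 0} ≤ ℵ₁ :=
    (mk_le_mk_of_subset fun _ hs => hs.1).trans
      (mk_measurableSet_le_continuum.trans_eq (lift_inj.1 (by simpa using hCH)))
  refine exists_sierpinski_of_mk_le_aleph_one volume _ hcard (fun _ ht => ht.2) fun s hs => ?_
  obtain ⟨t, hst, ht, ht0⟩ := exists_measurable_superset_of_null hs
  exact ⟨t, ⟨ht, ht0⟩, hst⟩
end
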